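/- arXiv:1507.01659 — 2 statements merged into one kernel-verified Lean document; each statement's English description precedes it below -/
import Mathlib

section
/- Let H be a real inner product space, let S be a subspace of H, let u, v, v' ∈ H, and let (φⱼ)_{j=1,…,J} be a finite orthonormal family of vectors of S. Assume that ⟨u − v', s⟩ = 0 for every s ∈ S, that v' − v ∈ S, and that ⟨u, φⱼ⟩ = 0 for every j. Let E > 0 satisfy ‖u − v‖² ≤ E. Then ‖u − v'‖² ≤ (1 − (Σⱼ ⟨v, φⱼ⟩²)/E) · ‖u − v‖². -/
open RealInnerProductSpace

theorem stmt_3 {H : Type*} [NormedAddCommGroup H] [InnerProductSpace ℝ H]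
    (S : Submodule ℝ H) (u v v' : H) (J : ℕ) (φ : Fin J → H)
    (hortho : Orthonormal ℝ φ) (hφS : ∀ j, φ j ∈ S)
    (hgal : ∀ s ∈ S, ⟪u - v', s⟫ = 0) (hdiff : v' - v ∈ S)
    (huφ : ∀ j, ⟪u, φ j⟫ = 0)
    (E : ℝ) (hE : 0 < E) (hbound : ‖u - v‖ ^ 2 ≤ E) :
    ‖u - v'‖ ^ 2 ≤ (1 - (∑ j, ⟪v, φ j⟫ ^ 2) / E) * ‖u - v‖ ^ 2 := by
  have hperp : ⟪u - v', v' - v⟫ = 0 := hgal _ hdiff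
  have hsplit : u - v = (u - v') + (v' - v) := by abel
  have hpyth : ‖u - v‖ ^ 2 = ‖u - v'‖ ^ 2 + ‖v' - v‖ ^ 2 := by
    rw [hsplit, norm_add_sq_real, hperp]; ring
  have hinner : ∀ j, ⟪v' - v, φ j⟫ = -⟪v, φ j⟫ := by
    intro j
    have h1 : ⟪u - v', φ j⟫ = 0 := hgal _ (hφS j)
    rw [inner_sub_left] at h1 ⊢
    have h2 := huφ j
    linarith
  have hbessel : ∑ j, ⟪v, φ j⟫ ^ 2 ≤ ‖v' - v‖ ^ 2 := by
    have := hortho.sum_inner_products_le (s := Finset.univ) (v' - v)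
    calc ∑ j, ⟪v, φ j⟫ ^ 2 = ∑ j, ‖⟪φ j, v' - v⟫‖ ^ 2 := by
          refine Finset.sum_congr rfl fun j _ => ?_
          rw [show ⟪φ j, v' - v⟫ = -⟪v, φ j⟫ from (real_inner_comm _ _).trans (hinner j)]
          simp [Real.norm_eq_abs, sq_abs]
      _ ≤ ‖v' - v‖ ^ 2 := this
  have hB : 0 ≤ ∑ j, ⟪v, φ j⟫ ^ 2 :=
    Finset.sum_nonneg fun j _ => sq_nonneg _
  have hA : 0 ≤ ‖u - v‖ ^ 2 := sq_nonneg _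
  have key : (∑ j, ⟪v, φ j⟫ ^ 2) / E * ‖u - v‖ ^ 2 ≤ ∑ j, ⟪v, φ j⟫ ^ 2 := by
    rw [div_mul_eq_mul_div, div_le_iff₀ hE]
    nlinarith
  nlinarith
end

section
/- Let H be a real inner product space, let u, v, v' ∈ H satisfy ⟨u − v', v' − v⟩ = 0, and let S, S' be nonnegative real numbers. Let ρ ∈ (0,1), L > 0, C > 0 and assume S'² ≤ ρ·S² + L·‖v' − v‖² and ‖u − v‖² ≤ C·S². Then ‖u − v'‖² + S'²/L ≤ ((C·L + ρ)/(C·L + 1)) · (‖u − v‖² + S²/L). -/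
/-!
Galerkin orthogonality gives `‖u - v‖² = ‖u - v'‖² + ‖v' - v‖²`, so dividing the estimator
reduction by `L` absorbs the `‖v' - v‖²` term exactly and leaves `‖u - v‖² + ρ S² / L`. Reliability
`‖u - v‖² ≤ C S²` then transfers part of the gain `1 - ρ` on the estimator to the error: the scaled
quasi-error `(C L + ρ) / (C L + 1) * (‖u - v‖² + S² / L)` exceeds this quantity by
`(1 - ρ) (C S² - ‖u - v‖²) / (C L + 1) ≥ 0`.
-/

open RealInnerProductSpace

lemma add_mul_div_le_contraction_mul {x s ρ L C : ℝ} (hρ : ρ ≤ 1) (hL : 0 < L) (hC : 0 ≤ C)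
    (hx : x ≤ C * s) :
    x + ρ * s / L ≤ (C * L + ρ) / (C * L + 1) * (x + s / L) := by
  have hden : 0 < C * L + 1 := by positivity
  have hdiff : (C * L + ρ) / (C * L + 1) * (x + s / L) - (x + ρ * s / L) =
      (1 - ρ) * (C * s - x) / (C * L + 1) := by
    field_simp
    ring
  rw [← sub_nonneg, hdiff]
  exact div_nonneg (mul_nonneg (sub_nonneg.2 hρ) (sub_nonneg.2 hx)) hden.le

theorem stmt_6_general {H : Type*} [NormedAddCommGroup H] [InnerProductSpace ℝ H]
    (u v v' : H) (horth : ⟪u - v', v' - v⟫ = 0)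
    (S S' : ℝ)
    (ρ : ℝ) (hρ : ρ ∈ Set.Ioo (0 : ℝ) 1) (L C : ℝ) (hL : 0 < L) (hC : 0 < C)
    (h1 : S' ^ 2 ≤ ρ * S ^ 2 + L * ‖v' - v‖ ^ 2)
    (h2 : ‖u - v‖ ^ 2 ≤ C * S ^ 2) :
    ‖u - v'‖ ^ 2 + S' ^ 2 / L ≤
      ((C * L + ρ) / (C * L + 1)) * (‖u - v‖ ^ 2 + S ^ 2 / L) := by
  have pythagoras : ‖u - v‖ ^ 2 = ‖u - v'‖ ^ 2 + ‖v' - v‖ ^ 2 := by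
    rw [← sub_add_sub_cancel u v' v, sq, sq, sq, norm_add_sq_eq_norm_sq_add_norm_sq_real horth]
  have estimator : S' ^ 2 / L ≤ ρ * S ^ 2 / L + ‖v' - v‖ ^ 2 := by
    calc S' ^ 2 / L ≤ (ρ * S ^ 2 + L * ‖v' - v‖ ^ 2) / L := by gcongr
      _ = ρ * S ^ 2 / L + ‖v' - v‖ ^ 2 := by field_simp
  calc ‖u - v'‖ ^ 2 + S' ^ 2 / L ≤ ‖u - v‖ ^ 2 + ρ * S ^ 2 / L := by linarith
    _ ≤ _ := add_mul_div_le_contraction_mul hρ.2.le hL hC.le h2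

theorem stmt_6 {H : Type*} [NormedAddCommGroup H] [InnerProductSpace ℝ H]
    (u v v' : H) (horth : ⟪u - v', v' - v⟫ = 0)
    (S S' : ℝ) (hS : 0 ≤ S) (hS' : 0 ≤ S')
    (ρ : ℝ) (hρ : ρ ∈ Set.Ioo (0 : ℝ) 1) (L C : ℝ) (hL : 0 < L) (hC : 0 < C)
    (h1 : S' ^ 2 ≤ ρ * S ^ 2 + L * ‖v' - v‖ ^ 2)
    (h2 : ‖u - v‖ ^ 2 ≤ C * S ^ 2) :
    ‖u - v'‖ ^ 2 + S' ^ 2 / L ≤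
      ((C * L + ρ) / (C * L + 1)) * (‖u - v‖ ^ 2 + S ^ 2 / L) :=
  stmt_6_general u v v' horth S S' ρ hρ L C hL hC h1 h2
end
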